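/- Let I be an ideal of ℝ[x], let Q be an indexed set of polynomials, let c be a cut-off function for Q, and let w be a positive integer. If there is R ∈ ℝ, R ≥ 0, such that Q ⊢^{c,I}_{w,2} R − x² ≥ 0 for every variable x, then for every polynomial p of degree at most 2d there exists r ∈ ℝ, r ≥ 0, such that Q ⊢^{c,I}_{w,2d} r ≥ p (i.e., the constant polynomial 1 is an order unit for the pre-order induced by the cone PS^{c,I}_{w,2d}(Q) on polynomials of degree at most 2d). -/

import Mathlib

open MvPolynomial

noncomputable section

/-- The sum of squares of a list of polynomials. -/
def sosOfI {σ : Type} (l : List (MvPolynomial σ ℝ)) : MvPolynomial σ ℝ :=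
  (l.map (· ^ 2)).sum

/-- A Positivstellensatz proof mod the ideal `I` of `goal ≥ 0` from the inequality
constraints `q j ≥ 0` (`j : Fin ℓ`) and the equality constraints `p j = 0`
(`j : Fin m`). -/
structure PSProofMod (σ : Type) (ℓ m : ℕ) (q : Fin ℓ → MvPolynomial σ ℝ)
    (p : Fin m → MvPolynomial σ ℝ) (I : Ideal (MvPolynomial σ ℝ))
    (goal : MvPolynomial σ ℝ) : Type where
  Js : Finset (Finset (Fin ℓ))
  empty_not_mem : ∅ ∉ Js
  r0 : List (MvPolynomial σ ℝ)
  r : Finset (Fin ℓ) → List (MvPolynomial σ ℝ)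
  t : Fin m → MvPolynomial σ ℝ
  identity : goal - (sosOfI r0 + ∑ J ∈ Js, sosOfI (r J) * ∏ j ∈ J, q j
      + ∑ j, t j * p j) ∈ I

/-- A cut-off function for the system `q, p`. -/
def IsCutoffI {σ : Type} {ℓ m : ℕ} (q : Fin ℓ → MvPolynomial σ ℝ)
    (p : Fin m → MvPolynomial σ ℝ) (c : Finset (Fin ℓ) ⊕ Fin m → ℕ) : Prop :=
  (∀ J : Finset (Fin ℓ), ∑ j ∈ J, (q j).totalDegree ≤ c (Sum.inl J)) ∧
  (∀ j : Fin m, (p j).totalDegree ≤ c (Sum.inr j))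

/-- The proof has degree mod `c` at most `d` (the zero polynomial having
degree `−∞`). -/
def PSProofMod.degreeModLE {σ : Type} {ℓ m : ℕ} {q : Fin ℓ → MvPolynomial σ ℝ}
    {p : Fin m → MvPolynomial σ ℝ} {I : Ideal (MvPolynomial σ ℝ)}
    {goal : MvPolynomial σ ℝ} (π : PSProofMod σ ℓ m q p I goal)
    (c : Finset (Fin ℓ) ⊕ Fin m → ℕ) (d : ℕ) : Prop :=
  goal.totalDegree ≤ d ∧ (sosOfI π.r0).totalDegree ≤ d ∧
  (∀ J ∈ π.Js, sosOfI (π.r J) ≠ 0 → (sosOfI (π.r J)).totalDegree + c (Sum.inl J) ≤ d) ∧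
  (∀ j, π.t j ≠ 0 → (π.t j).totalDegree + c (Sum.inr j) ≤ d)

/-- The proof has product-width at most `w`. -/
def PSProofMod.widthLE {σ : Type} {ℓ m : ℕ} {q : Fin ℓ → MvPolynomial σ ℝ}
    {p : Fin m → MvPolynomial σ ℝ} {I : Ideal (MvPolynomial σ ℝ)}
    {goal : MvPolynomial σ ℝ} (π : PSProofMod σ ℓ m q p I goal) (w : ℕ) : Prop :=
  ∀ J ∈ π.Js, J.card ≤ w

/-- `PS^{c,I}_{w,d}(Q)`: the cone of polynomials of degree at most `d` with a PS
proof mod `I` of degree mod `c` at most `d` and product-width at most `w`.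
`Q ⊢^{c,I}_{w,d} a ≥ b` is expressed as `a - b ∈ PSconeI …`. -/
def PSconeI (σ : Type) (ℓ m : ℕ) (q : Fin ℓ → MvPolynomial σ ℝ)
    (p : Fin m → MvPolynomial σ ℝ) (I : Ideal (MvPolynomial σ ℝ))
    (c : Finset (Fin ℓ) ⊕ Fin m → ℕ) (w d : ℕ) : Set (MvPolynomial σ ℝ) :=
  {g | g.totalDegree ≤ d ∧
    ∃ π : PSProofMod σ ℓ m q p I g, π.degreeModLE c d ∧ π.widthLE w}

/-!
The cone `PS^{c,I}_{w,d}(Q)` is closed under sums, under multiplication by nonnegative constants,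
and under multiplication by a square `f²` at the cost of `2 deg f` in the degree. The identity
`rs - (gh)² = s (r - g²) + g² (s - h²)` turns the hypotheses `R - x_v² ≥ 0` into
`R^|β| - (x^β)² ≥ 0` for every monomial. A monomial `x^α` with `|α| ≤ 2d` factors as `x^β x^γ`
with `|β|, |γ| ≤ d`, and `(r + s)/2 - gh = ½ ((r - g²) + (s - h²) + (g - h)²)` then bounds it by
a constant in degree `2d`; summing these bounds over the terms of `p₀` gives `r`.
-/

@[simp]
lemma sosOfI_nil {σ : Type} : sosOfI ([] : List (MvPolynomial σ ℝ)) = 0 := rfl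

lemma sosOfI_append {σ : Type} (l₁ l₂ : List (MvPolynomial σ ℝ)) :
    sosOfI (l₁ ++ l₂) = sosOfI l₁ + sosOfI l₂ := by
  simp [sosOfI]

lemma sosOfI_map_mul {σ : Type} (f : MvPolynomial σ ℝ) (l : List (MvPolynomial σ ℝ)) :
    sosOfI (l.map (f * ·)) = f ^ 2 * sosOfI l := by
  simp [sosOfI, Function.comp_def, mul_pow, List.sum_map_mul_left]

lemma totalDegree_add_add_le_of_ne_zero {σ R : Type*} [CommSemiring R]
    {a b : MvPolynomial σ R} {k e : ℕ} (ha : a ≠ 0 → a.totalDegree + k ≤ e)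
    (hb : b ≠ 0 → b.totalDegree + k ≤ e) (hab : a + b ≠ 0) :
    (a + b).totalDegree + k ≤ e := by
  rcases eq_or_ne a 0 with rfl | ha0
  · simpa using hb (by simpa using hab)
  rcases eq_or_ne b 0 with rfl | hb0
  · simpa using ha (by simpa using hab)
  have := totalDegree_add a b
  have := ha ha0
  have := hb hb0
  omega

lemma totalDegree_sq_mul_le {σ R : Type*} [CommSemiring R] {f : MvPolynomial σ R} {k : ℕ}
    (hf : f.totalDegree ≤ k) (a : MvPolynomial σ R) :
    (f ^ 2 * a).totalDegree ≤ a.totalDegree + 2 * k :=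
  (totalDegree_mul _ _).trans (by have := totalDegree_pow f 2; omega)

namespace PSProofMod

variable {σ : Type} {ℓ m : ℕ} {q : Fin ℓ → MvPolynomial σ ℝ} {p : Fin m → MvPolynomial σ ℝ}
  {I : Ideal (MvPolynomial σ ℝ)} {c : Finset (Fin ℓ) ⊕ Fin m → ℕ} {d w : ℕ}

def ofSq (f : MvPolynomial σ ℝ) : PSProofMod σ ℓ m q p I (f ^ 2) where
  Js := ∅
  empty_not_mem := Finset.notMem_empty ∅
  r0 := [f]
  r _ := []
  t _ := 0
  identity := by simp [sosOfI]

lemma degreeModLE_ofSq {f : MvPolynomial σ ℝ} (hf : (f ^ 2).totalDegree ≤ d) :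
    (ofSq f : PSProofMod σ ℓ m q p I _).degreeModLE c d :=
  ⟨hf, by simpa [ofSq, sosOfI] using hf, by simp [ofSq], by simp [ofSq]⟩

lemma widthLE_ofSq (f : MvPolynomial σ ℝ) : (ofSq f : PSProofMod σ ℓ m q p I _).widthLE w := by
  simp [widthLE, ofSq]

def add {g₁ g₂ : MvPolynomial σ ℝ} (π₁ : PSProofMod σ ℓ m q p I g₁)
    (π₂ : PSProofMod σ ℓ m q p I g₂) : PSProofMod σ ℓ m q p I (g₁ + g₂) where
  Js := π₁.Js ∪ π₂.Js
  empty_not_mem := by simp [π₁.empty_not_mem, π₂.empty_not_mem]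
  r0 := π₁.r0 ++ π₂.r0
  r J := (if J ∈ π₁.Js then π₁.r J else []) ++ (if J ∈ π₂.Js then π₂.r J else [])
  t j := π₁.t j + π₂.t j
  identity := by
    convert I.add_mem π₁.identity π₂.identity using 1
    simp only [sosOfI_append, apply_ite sosOfI, sosOfI_nil, add_mul, ite_mul, zero_mul,
      Finset.sum_add_distrib, Finset.sum_ite_mem, Finset.union_inter_cancel_left,
      Finset.union_inter_cancel_right]
    ring

lemma degreeModLE_add {g₁ g₂ : MvPolynomial σ ℝ} {π₁ : PSProofMod σ ℓ m q p I g₁}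
    {π₂ : PSProofMod σ ℓ m q p I g₂} (h₁ : π₁.degreeModLE c d) (h₂ : π₂.degreeModLE c d) :
    (π₁.add π₂).degreeModLE c d := by
  obtain ⟨hg₁, hr0₁, hr₁, ht₁⟩ := h₁
  obtain ⟨hg₂, hr0₂, hr₂, ht₂⟩ := h₂
  refine ⟨(totalDegree_add _ _).trans (max_le hg₁ hg₂),
    (sosOfI_append π₁.r0 π₂.r0 ▸ totalDegree_add _ _).trans (max_le hr0₁ hr0₂), fun J _ => ?_,
    fun j => totalDegree_add_add_le_of_ne_zero (ht₁ j) (ht₂ j)⟩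
  simp only [add, sosOfI_append]
  refine totalDegree_add_add_le_of_ne_zero ?_ ?_
  · split_ifs with hJ
    exacts [hr₁ J hJ, by simp]
  · split_ifs with hJ
    exacts [hr₂ J hJ, by simp]

lemma widthLE_add {g₁ g₂ : MvPolynomial σ ℝ} {π₁ : PSProofMod σ ℓ m q p I g₁}
    {π₂ : PSProofMod σ ℓ m q p I g₂} (h₁ : π₁.widthLE w) (h₂ : π₂.widthLE w) :
    (π₁.add π₂).widthLE w := by
  intro J hJ
  rcases Finset.mem_union.mp hJ with hJ | hJ
  exacts [h₁ J hJ, h₂ J hJ]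

def sqMul (f : MvPolynomial σ ℝ) {g : MvPolynomial σ ℝ} (π : PSProofMod σ ℓ m q p I g) :
    PSProofMod σ ℓ m q p I (f ^ 2 * g) where
  Js := π.Js
  empty_not_mem := π.empty_not_mem
  r0 := π.r0.map (f * ·)
  r J := (π.r J).map (f * ·)
  t j := f ^ 2 * π.t j
  identity := by
    convert I.mul_mem_left (f ^ 2) π.identity using 1
    simp only [sosOfI_map_mul, mul_sub, mul_add, Finset.mul_sum, mul_assoc]

lemma degreeModLE_sqMul {f g : MvPolynomial σ ℝ} {k : ℕ} (hf : f.totalDegree ≤ k)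
    {π : PSProofMod σ ℓ m q p I g} (h : π.degreeModLE c d) :
    (π.sqMul f).degreeModLE c (d + 2 * k) := by
  obtain ⟨hg, hr0, hr, ht⟩ := h
  refine ⟨(totalDegree_sq_mul_le hf g).trans (by omega), ?_, fun J hJ hJ0 => ?_,
    fun j hj0 => ?_⟩
  · simp only [sqMul, sosOfI_map_mul]
    exact (totalDegree_sq_mul_le hf _).trans (by omega)
  · simp only [sqMul, sosOfI_map_mul] at hJ0 ⊢
    have := hr J hJ (right_ne_zero_of_mul hJ0)
    have := totalDegree_sq_mul_le hf (sosOfI (π.r J))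
    omega
  · have := ht j (right_ne_zero_of_mul hj0)
    have := totalDegree_sq_mul_le hf (π.t j)
    simp only [sqMul]
    omega

end PSProofMod

namespace PSconeI

variable {σ : Type} {ℓ m : ℕ} {q : Fin ℓ → MvPolynomial σ ℝ} {p : Fin m → MvPolynomial σ ℝ}
  {I : Ideal (MvPolynomial σ ℝ)} {c : Finset (Fin ℓ) ⊕ Fin m → ℕ} {d w : ℕ}

lemma mono {d' : ℕ} (h : d ≤ d') : PSconeI σ ℓ m q p I c w d ⊆ PSconeI σ ℓ m q p I c w d' := by
  rintro g ⟨hg, π, ⟨h0, hr0, hr, ht⟩, hπ⟩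
  exact ⟨hg.trans h, π, ⟨h0.trans h, hr0.trans h, fun J hJ hJ0 => (hr J hJ hJ0).trans h,
    fun j hj0 => (ht j hj0).trans h⟩, hπ⟩

lemma sq_mem {f : MvPolynomial σ ℝ} (hf : (f ^ 2).totalDegree ≤ d) :
    f ^ 2 ∈ PSconeI σ ℓ m q p I c w d :=
  ⟨hf, .ofSq f, PSProofMod.degreeModLE_ofSq hf, PSProofMod.widthLE_ofSq f⟩

lemma zero_mem : (0 : MvPolynomial σ ℝ) ∈ PSconeI σ ℓ m q p I c w d := by
  simpa using sq_mem (σ := σ) (f := 0) (by simp)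

lemma add_mem {g₁ g₂ : MvPolynomial σ ℝ} (h₁ : g₁ ∈ PSconeI σ ℓ m q p I c w d)
    (h₂ : g₂ ∈ PSconeI σ ℓ m q p I c w d) : g₁ + g₂ ∈ PSconeI σ ℓ m q p I c w d := by
  obtain ⟨-, π₁, hd₁, hw₁⟩ := h₁
  obtain ⟨-, π₂, hd₂, hw₂⟩ := h₂
  have hd := PSProofMod.degreeModLE_add hd₁ hd₂
  exact ⟨hd.1, π₁.add π₂, hd, PSProofMod.widthLE_add hw₁ hw₂⟩

lemma sq_mul_mem {f g : MvPolynomial σ ℝ} {k : ℕ} (hf : f.totalDegree ≤ k)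
    (hg : g ∈ PSconeI σ ℓ m q p I c w d) : f ^ 2 * g ∈ PSconeI σ ℓ m q p I c w (d + 2 * k) := by
  obtain ⟨-, π, hd, hw⟩ := hg
  have hd' := PSProofMod.degreeModLE_sqMul hf hd
  exact ⟨hd'.1, π.sqMul f, hd', hw⟩

lemma C_mul_mem {a : ℝ} {g : MvPolynomial σ ℝ} (ha : 0 ≤ a)
    (hg : g ∈ PSconeI σ ℓ m q p I c w d) : C a * g ∈ PSconeI σ ℓ m q p I c w d := by
  have hsqrt : (C √a : MvPolynomial σ ℝ) ^ 2 = C a := by rw [← map_pow, Real.sq_sqrt ha]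
  simpa [hsqrt] using sq_mul_mem (k := 0) (totalDegree_C √a).le hg

end PSconeI

section OrderUnit

variable {σ : Type} {ℓ m : ℕ} {q : Fin ℓ → MvPolynomial σ ℝ} {p : Fin m → MvPolynomial σ ℝ}
  {I : Ideal (MvPolynomial σ ℝ)} {c : Finset (Fin ℓ) ⊕ Fin m → ℕ} {d w : ℕ}

lemma C_mul_sub_mul_sq_mem {r s : ℝ} {g h : MvPolynomial σ ℝ} {k j : ℕ} (hs : 0 ≤ s)
    (hg : g.totalDegree ≤ k) (hgr : C r - g ^ 2 ∈ PSconeI σ ℓ m q p I c w (2 * k))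
    (hhs : C s - h ^ 2 ∈ PSconeI σ ℓ m q p I c w (2 * j)) :
    C (r * s) - (g * h) ^ 2 ∈ PSconeI σ ℓ m q p I c w (2 * (k + j)) := by
  have e : C (r * s) - (g * h) ^ 2 = C s * (C r - g ^ 2) + g ^ 2 * (C s - h ^ 2) := by
    rw [map_mul]; ring
  rw [e]
  exact PSconeI.add_mem (PSconeI.mono (by omega) (PSconeI.C_mul_mem hs hgr))
    (PSconeI.mono (by omega) (PSconeI.sq_mul_mem hg hhs))

lemma C_pow_sub_X_pow_sq_mem {R : ℝ} (hR : 0 ≤ R) {v : σ}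
    (hv : C R - X v ^ 2 ∈ PSconeI σ ℓ m q p I c w 2) (n : ℕ) :
    C (R ^ n) - (X v ^ n) ^ 2 ∈ PSconeI σ ℓ m q p I c w (2 * n) := by
  induction n with
  | zero => simpa using PSconeI.zero_mem
  | succ n ih =>
    rw [pow_succ, pow_succ]
    exact C_mul_sub_mul_sq_mem hR (totalDegree_X_pow v n).le ih (by simpa using hv)

lemma C_pow_sub_monomial_sq_mem {R : ℝ} (hR : 0 ≤ R)
    (hball : ∀ v : σ, C R - X v ^ 2 ∈ PSconeI σ ℓ m q p I c w 2) (β : σ →₀ ℕ) :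
    C (R ^ β.degree) - (monomial β 1) ^ 2 ∈ PSconeI σ ℓ m q p I c w (2 * β.degree) := by
  induction β using Finsupp.induction_linear with
  | zero => simpa using PSconeI.zero_mem
  | add β γ hβ hγ =>
    rw [map_add, pow_add, ← one_mul (1 : ℝ), ← monomial_mul]
    exact C_mul_sub_mul_sq_mem (pow_nonneg hR _) (totalDegree_monomial_le β 1) hβ hγ
  | single v n => simpa [X_pow_eq_monomial] using C_pow_sub_X_pow_sq_mem hR (hball v) n

lemma C_half_add_sub_mul_mem {r s : ℝ} {g h : MvPolynomial σ ℝ} (hg : g.totalDegree ≤ d)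
    (hh : h.totalDegree ≤ d) (hgr : C r - g ^ 2 ∈ PSconeI σ ℓ m q p I c w (2 * d))
    (hhs : C s - h ^ 2 ∈ PSconeI σ ℓ m q p I c w (2 * d)) :
    C ((r + s) / 2) - g * h ∈ PSconeI σ ℓ m q p I c w (2 * d) := by
  have hsq : (g - h) ^ 2 ∈ PSconeI σ ℓ m q p I c w (2 * d) := by
    refine PSconeI.sq_mem ((totalDegree_pow _ 2).trans ?_)
    have := totalDegree_sub g h
    omega
  have hhalf : (C (2⁻¹ : ℝ) : MvPolynomial σ ℝ) * 2 = 1 := by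
    rw [← map_ofNat C 2, ← map_mul]; norm_num
  have e : C ((r + s) / 2) - g * h = C 2⁻¹ * ((C r - g ^ 2) + (C s - h ^ 2) + (g - h) ^ 2) := by
    rw [div_eq_inv_mul, map_mul, map_add]
    linear_combination (g * h) * hhalf
  rw [e]
  exact PSconeI.C_mul_mem (by norm_num) (PSconeI.add_mem (PSconeI.add_mem hgr hhs) hsq)

lemma exists_C_sub_monomial_mem {R : ℝ} (hR : 0 ≤ R)
    (hball : ∀ v : σ, C R - X v ^ 2 ∈ PSconeI σ ℓ m q p I c w 2) {α : σ →₀ ℕ}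
    (hα : α.degree ≤ 2 * d) (a : ℝ) :
    ∃ r, 0 ≤ r ∧ C r - monomial α a ∈ PSconeI σ ℓ m q p I c w (2 * d) := by
  obtain ⟨β, hβα, hβ⟩ := α.exists_le_degree_eq (min α.degree d) (min_le_left _ _)
  set γ := α - β
  have hα : β + γ = α := add_tsub_cancel_of_le hβα
  have hγ : γ.degree ≤ d := by
    have := map_add Finsupp.degree β γ
    rw [hα] at this
    omega
  have hβd : β.degree ≤ d := hβ ▸ min_le_right _ _
  have hg := PSconeI.mono (show 2 * β.degree ≤ 2 * d by omega)
    (C_pow_sub_monomial_sq_mem hR hball β)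
  have hh : C (a ^ 2 * R ^ γ.degree) - (monomial γ a) ^ 2 ∈ PSconeI σ ℓ m q p I c w (2 * d) := by
    convert PSconeI.mono (show 2 * γ.degree ≤ 2 * d by omega)
      (PSconeI.C_mul_mem (sq_nonneg a) (C_pow_sub_monomial_sq_mem hR hball γ)) using 1
    rw [map_mul, map_pow, ← mul_one a, ← C_mul_monomial, mul_one]
    ring
  have hgh : monomial β 1 * monomial γ a = (monomial α a : MvPolynomial σ ℝ) := by
    rw [monomial_mul, hα, one_mul]
  refine ⟨_, by positivity, hgh ▸ C_half_add_sub_mul_mem ?_ ?_ hg hh⟩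
  exacts [(totalDegree_monomial_le β 1).trans hβd, (totalDegree_monomial_le γ a).trans hγ]

lemma exists_C_sub_sum_mem {ι : Type*} {s : Finset ι} {f : ι → MvPolynomial σ ℝ}
    (h : ∀ i ∈ s, ∃ r, 0 ≤ r ∧ C r - f i ∈ PSconeI σ ℓ m q p I c w d) :
    ∃ r, 0 ≤ r ∧ C r - ∑ i ∈ s, f i ∈ PSconeI σ ℓ m q p I c w d := by
  refine Finset.sum_induction f (fun g => ∃ r, 0 ≤ r ∧ C r - g ∈ PSconeI σ ℓ m q p I c w d)
    (fun g₁ g₂ ⟨r₁, hr₁, h₁⟩ ⟨r₂, hr₂, h₂⟩ => ⟨r₁ + r₂, add_nonneg hr₁ hr₂, ?_⟩)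
    ⟨0, le_rfl, by simpa using PSconeI.zero_mem⟩ h
  convert PSconeI.add_mem h₁ h₂ using 1
  rw [map_add]
  ring

end OrderUnit

theorem statement15_general (σ : Type) (ℓ m : ℕ) (q : Fin ℓ → MvPolynomial σ ℝ)
    (p : Fin m → MvPolynomial σ ℝ) (I : Ideal (MvPolynomial σ ℝ))
    (c : Finset (Fin ℓ) ⊕ Fin m → ℕ) (w : ℕ)
    (R : ℝ) (hR : 0 ≤ R)
    (hball : ∀ v : σ, (C R - X v ^ 2 : MvPolynomial σ ℝ) ∈ PSconeI σ ℓ m q p I c w 2)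
    (d : ℕ) (p₀ : MvPolynomial σ ℝ) (hp₀ : p₀.totalDegree ≤ 2 * d) :
    ∃ r : ℝ, 0 ≤ r ∧ (C r - p₀) ∈ PSconeI σ ℓ m q p I c w (2 * d) := by
  rw [← support_sum_monomial_coeff p₀]
  exact exists_C_sub_sum_mem fun α hα =>
    exists_C_sub_monomial_mem hR hball ((le_totalDegree hα).trans hp₀) (coeff α p₀)

/-- **Lemma (order unit).** If `Q ⊢^{c,I}_{w,2} R − x² ≥ 0` for every variable `x`
and some `R ≥ 0`, then for every polynomial `p₀` of degree at most `2d` there is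
`r ≥ 0` with `Q ⊢^{c,I}_{w,2d} r ≥ p₀`; i.e. the constant `1` is an order unit for
the pre-order induced by `PS^{c,I}_{w,2d}(Q)` on polynomials of degree at most `2d`. -/
theorem statement15 (σ : Type) (ℓ m : ℕ) (q : Fin ℓ → MvPolynomial σ ℝ)
    (p : Fin m → MvPolynomial σ ℝ) (I : Ideal (MvPolynomial σ ℝ))
    (c : Finset (Fin ℓ) ⊕ Fin m → ℕ) (hc : IsCutoffI q p c) (w : ℕ) (hw : 0 < w)
    (R : ℝ) (hR : 0 ≤ R)
    (hball : ∀ v : σ, (C R - X v ^ 2 : MvPolynomial σ ℝ) ∈ PSconeI σ ℓ m q p I c w 2)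
    (d : ℕ) (p₀ : MvPolynomial σ ℝ) (hp₀ : p₀.totalDegree ≤ 2 * d) :
    ∃ r : ℝ, 0 ≤ r ∧ (C r - p₀) ∈ PSconeI σ ℓ m q p I c w (2 * d) :=
  statement15_general σ ℓ m q p I c w R hR hball d p₀ hp₀
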